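/- Let u : [0,∞) → X be continuous, X a complex Banach space, with ‖u(t)‖ ≤ C e^{-δ t} for constants C, δ > 0. If all even moments ∫₀^∞ t^{2k} u(t) dt (k ≥ 0) vanish, then u ≡ 0 on [0,∞). -/

import Mathlib

/-! Extend `u` evenly to `w t = u |t|`: the odd moments of `w` vanish by symmetry and the even
ones by hypothesis. Exponential decay makes `𝓕 w` real-analytic, with Taylor series
`∑ₙ (-2πih)ⁿ / n! • 𝓕 (tⁿ • w) v` at every `v`, convergent for `|h| < δ / 2π`. At `v = 0` the
coefficients are the moments of `w`, so `𝓕 w` vanishes near `0`, hence everywhere by the identity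
theorem, and Fourier inversion gives `w = 0`. -/

open MeasureTheory Set Real
open scoped Nat FourierTransform Complex

lemma IntegrableOn.integrable_comp_abs {E : Type*} [NormedAddCommGroup E] {g : ℝ → E}
    (hg : IntegrableOn g (Ioi 0)) : Integrable (fun t => g |t|) := by
  have h_Ioi : IntegrableOn (fun t => g |t|) (Ioi 0) :=
    hg.congr_fun (fun t ht => by rw [abs_of_pos ht]) measurableSet_Ioi
  have h_Iic : IntegrableOn (fun t => g |t|) (Iic 0) := by
    rw [← Measure.map_neg_eq_self (volume : Measure ℝ),
      (measurableEmbedding_neg (α := ℝ)).integrableOn_map_iff]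
    simpa [Function.comp_def, neg_preimage] using
      Iff.mpr integrableOn_Ici_iff_integrableOn_Ioi h_Ioi
  rw [← integrableOn_univ, ← Iic_union_Ioi (a := (0:ℝ))]
  exact h_Iic.union h_Ioi

lemma integrable_abs_pow_mul_exp_neg_mul_abs {δ : ℝ} (hδ : 0 < δ) (n : ℕ) :
    Integrable (fun t : ℝ => |t| ^ n * exp (-(δ * |t|))) := by
  refine IntegrableOn.integrable_comp_abs (g := fun s => s ^ n * exp (-(δ * s))) ?_
  simpa [Real.rpow_natCast] using integrableOn_rpow_mul_exp_neg_mul_rpow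
    (s := n) (p := 1) (by linarith [n.cast_nonneg (α := ℝ)]) one_pos hδ

lemma integral_abs_pow_mul_exp_neg_mul_abs {δ : ℝ} (hδ : 0 < δ) (n : ℕ) :
    ∫ t : ℝ, |t| ^ n * exp (-(δ * |t|)) = 2 * n ! / δ ^ (n + 1) := by
  have h := integral_rpow_mul_exp_neg_mul_Ioi (a := n + 1) (by positivity) hδ
  rw [add_sub_cancel_right, Gamma_nat_eq_factorial, ← Nat.cast_add_one] at h
  simp only [Real.rpow_natCast] at h
  rw [integral_comp_abs (f := fun s => s ^ n * exp (-(δ * s))), h, one_div, inv_pow]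
  field_simp

lemma integral_eq_setIntegral_Ioi_add_comp_neg {E : Type*} [NormedAddCommGroup E]
    [NormedSpace ℝ E] {f : ℝ → E} (hf : Integrable f) :
    ∫ t, f t = (∫ t in Ioi 0, f t) + ∫ t in Ioi 0, f (-t) := by
  rw [integral_comp_neg_Ioi, neg_zero, add_comm,
    intervalIntegral.integral_Iic_add_Ioi hf.integrableOn hf.integrableOn]

section ExponentialDecay

variable {X : Type*} [NormedAddCommGroup X] [NormedSpace ℂ X] {w : ℝ → X} {C δ : ℝ}

lemma norm_ofReal_pow_smul (t : ℝ) (n : ℕ) (x : X) : ‖(t : ℂ) ^ n • x‖ = |t| ^ n * ‖x‖ := by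
  rw [norm_smul, norm_pow, Complex.norm_real, Real.norm_eq_abs]

lemma norm_ofReal_pow_smul_le (hb : ∀ t, ‖w t‖ ≤ C * exp (-(δ * |t|))) (n : ℕ) (t : ℝ) :
    ‖(t : ℂ) ^ n • w t‖ ≤ C * (|t| ^ n * exp (-(δ * |t|))) := by
  rw [norm_ofReal_pow_smul, mul_left_comm]
  exact mul_le_mul_of_nonneg_left (hb t) (by positivity)

lemma integrable_ofReal_pow_smul (hw : AEStronglyMeasurable w) (hδ : 0 < δ)
    (hb : ∀ t, ‖w t‖ ≤ C * exp (-(δ * |t|))) (n : ℕ) :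
    Integrable (fun t : ℝ => (t : ℂ) ^ n • w t) :=
  ((integrable_abs_pow_mul_exp_neg_mul_abs hδ n).const_mul C).mono'
    ((by fun_prop : Continuous fun t : ℝ => (t : ℂ) ^ n).aestronglyMeasurable.smul hw)
    (.of_forall (norm_ofReal_pow_smul_le hb n))

lemma integral_norm_ofReal_pow_smul_le (hw : AEStronglyMeasurable w) (hδ : 0 < δ)
    (hb : ∀ t, ‖w t‖ ≤ C * exp (-(δ * |t|))) (n : ℕ) :
    ∫ t : ℝ, ‖(t : ℂ) ^ n • w t‖ ≤ C * (2 * n ! / δ ^ (n + 1)) := by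
  rw [← integral_abs_pow_mul_exp_neg_mul_abs hδ n, ← integral_const_mul]
  exact integral_mono (integrable_ofReal_pow_smul hw hδ hb n).norm
    ((integrable_abs_pow_mul_exp_neg_mul_abs hδ n).const_mul C) (norm_ofReal_pow_smul_le hb n)

lemma norm_fourier_le_integral_norm (f : ℝ → X) (v : ℝ) : ‖𝓕 f v‖ ≤ ∫ t, ‖f t‖ := by
  rw [Real.fourier_real_eq]
  exact (norm_integral_le_integral_norm _).trans_eq (by simp only [Circle.norm_smul])

lemma integrable_fourier_integrand {f : ℝ → X} (hf : Integrable f) (v : ℝ) :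
    Integrable (fun t : ℝ => cexp (↑(-2 * π * t * v) * Complex.I) • f t) :=
  hf.bdd_smul 1 (by fun_prop) (.of_forall fun t => (Complex.norm_exp_ofReal_mul_I _).le)

variable (w) in
noncomputable def fourierTaylorSeries (v : ℝ) : FormalMultilinearSeries ℝ ℝ X :=
  fun n => ContinuousMultilinearMap.mkPiRing ℝ (Fin n)
    (((-2 * π * Complex.I) ^ n / n !) • 𝓕 (fun t : ℝ => (t : ℂ) ^ n • w t) v)

lemma fourierTaylorSeries_apply (v : ℝ) (n : ℕ) (h : ℝ) :
    fourierTaylorSeries w v n (fun _ => h) =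
      ((-2 * π * Complex.I * h) ^ n / n !) • 𝓕 (fun t : ℝ => (t : ℂ) ^ n • w t) v := by
  rw [fourierTaylorSeries, ContinuousMultilinearMap.mkPiRing_apply, Finset.prod_const,
    Finset.card_univ, Fintype.card_fin, ← Complex.coe_smul, smul_smul]
  congr 1
  push_cast
  ring

lemma norm_fourierTaylorSeries_le (hw : AEStronglyMeasurable w) (hδ : 0 < δ)
    (hb : ∀ t, ‖w t‖ ≤ C * exp (-(δ * |t|))) (v : ℝ) (n : ℕ) :
    ‖fourierTaylorSeries w v n‖ ≤ 2 * C / δ * (2 * π / δ) ^ n := by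
  have h_coeff : ‖(-2 * π * Complex.I) ^ n / (n ! : ℂ)‖ = (2 * π) ^ n / n ! := by
    simp [abs_of_pos pi_pos]
  rw [fourierTaylorSeries, ContinuousMultilinearMap.norm_mkPiRing, norm_smul, h_coeff]
  calc (2 * π) ^ n / n ! * ‖𝓕 (fun t : ℝ => (t : ℂ) ^ n • w t) v‖
      ≤ (2 * π) ^ n / n ! * (C * (2 * n ! / δ ^ (n + 1))) := by
        gcongr
        exact (norm_fourier_le_integral_norm _ v).trans
          (integral_norm_ofReal_pow_smul_le hw hδ hb n)
    _ = 2 * C / δ * (2 * π / δ) ^ n := by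
        rw [div_pow]
        field_simp
        ring

lemma hasSum_fourierTaylorSeries (hw : AEStronglyMeasurable w) (hδ : 0 < δ)
    (hb : ∀ t, ‖w t‖ ≤ C * exp (-(δ * |t|))) (v : ℝ) {h : ℝ} (hh : |h| < δ / (2 * π)) :
    HasSum (fun n => fourierTaylorSeries w v n (fun _ => h)) (𝓕 w (v + h)) := by
  set c : ℕ → ℂ := fun n => (-2 * π * Complex.I * h) ^ n / (n ! : ℂ)
  set G : ℕ → ℝ → X := fun n t =>
    c n • cexp (↑(-2 * π * t * v) * Complex.I) • (t : ℂ) ^ n • w t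
  have hG_int (n : ℕ) : Integrable (G n) :=
    ((integrable_fourier_integrand (integrable_ofReal_pow_smul hw hδ hb n) v).smul (c n))
  have hG_integral (n : ℕ) : ∫ t, G n t = fourierTaylorSeries w v n (fun _ => h) := by
    rw [fourierTaylorSeries_apply, integral_smul, Real.fourier_real_eq_integral_exp_smul]
  have hc_norm (n : ℕ) : ‖c n‖ = (2 * π * |h|) ^ n / n ! := by
    simp [c, abs_of_pos pi_pos]
  have hG_norm (n : ℕ) : ∫ t, ‖G n t‖ ≤ 2 * C / δ * (2 * π * |h| / δ) ^ n := by
    calc ∫ t, ‖G n t‖ = ‖c n‖ * ∫ t : ℝ, ‖(t : ℂ) ^ n • w t‖ := by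
          simp only [G, norm_smul, Complex.norm_exp_ofReal_mul_I, one_mul, integral_const_mul]
      _ ≤ (2 * π * |h|) ^ n / n ! * (C * (2 * n ! / δ ^ (n + 1))) := by
          rw [hc_norm]
          gcongr
          exact integral_norm_ofReal_pow_smul_le hw hδ hb n
      _ = 2 * C / δ * (2 * π * |h| / δ) ^ n := by
          rw [div_pow]
          field_simp
          ring
  have hq : 2 * π * |h| / δ < 1 := by
    rw [div_lt_one hδ]
    rwa [lt_div_iff₀ (by positivity), mul_comm] at hh
  have hG_summable : Summable fun n => ∫ t, ‖G n t‖ :=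
    .of_nonneg_of_le (fun n => integral_nonneg fun t => norm_nonneg _) hG_norm
      ((summable_geometric_of_lt_one (by positivity) hq).mul_left _)
  have hG_tsum (t : ℝ) : ∑' n, G n t = cexp (↑(-2 * π * t * (v + h)) * Complex.I) • w t := by
    have h_exp := (NormedSpace.expSeries_div_hasSum_exp (-2 * π * Complex.I * h * t)).smul_const
      (cexp (↑(-2 * π * t * v) * Complex.I) • w t)
    rw [← Complex.exp_eq_exp_ℂ, smul_smul, ← Complex.exp_add] at h_exp
    convert h_exp.tsum_eq using 3 with n
    · simp only [G, c, smul_smul]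
      congr 1
      ring
    · push_cast
      ring
  simpa only [hG_integral, hG_tsum, ← Real.fourier_real_eq_integral_exp_smul] using
    hasSum_integral_of_summable_integral_norm hG_int hG_summable

lemma hasFPowerSeriesOnBall_fourier (hw : AEStronglyMeasurable w) (hδ : 0 < δ)
    (hb : ∀ t, ‖w t‖ ≤ C * exp (-(δ * |t|))) (v : ℝ) :
    HasFPowerSeriesOnBall (𝓕 w) (fourierTaylorSeries w v) v (ENNReal.ofReal (δ / (2 * π))) where
  r_le := by
    refine (fourierTaylorSeries w v).le_radius_of_bound (2 * C / δ) fun n => ?_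
    rw [Real.coe_toNNReal _ (by positivity)]
    calc ‖fourierTaylorSeries w v n‖ * (δ / (2 * π)) ^ n
        ≤ 2 * C / δ * (2 * π / δ) ^ n * (δ / (2 * π)) ^ n := by
          gcongr
          exact norm_fourierTaylorSeries_le hw hδ hb v n
      _ = 2 * C / δ := by
          rw [mul_assoc, ← mul_pow, div_mul_div_cancel₀ hδ.ne', div_self (by positivity), one_pow,
            mul_one]
  r_pos := by simp only [ENNReal.ofReal_pos]; positivity
  hasSum hy := by
    refine hasSum_fourierTaylorSeries hw hδ hb v ?_
    simpa [edist_dist, Real.dist_eq, ENNReal.ofReal_lt_ofReal_iff (by positivity : 0 < δ / (2 * π))]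
      using hy

lemma analyticOnNhd_fourier (hw : AEStronglyMeasurable w) (hδ : 0 < δ)
    (hb : ∀ t, ‖w t‖ ≤ C * exp (-(δ * |t|))) : AnalyticOnNhd ℝ (𝓕 w) univ :=
  fun v _ => (hasFPowerSeriesOnBall_fourier hw hδ hb v).analyticAt

lemma fourierTaylorSeries_zero_eq_zero (hm : ∀ n : ℕ, ∫ t : ℝ, (t : ℂ) ^ n • w t = 0) :
    fourierTaylorSeries w 0 = 0 := by
  ext1 n
  simp [fourierTaylorSeries, Real.fourier_real_eq_integral_exp_smul, hm,
    ContinuousMultilinearMap.mkPiRing_zero]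

lemma fourier_eq_zero_of_moments_eq_zero (hw : AEStronglyMeasurable w) (hδ : 0 < δ)
    (hb : ∀ t, ‖w t‖ ≤ C * exp (-(δ * |t|)))
    (hm : ∀ n : ℕ, ∫ t : ℝ, (t : ℂ) ^ n • w t = 0) : 𝓕 w = 0 := by
  have h_near_zero : 𝓕 w =ᶠ[nhds 0] 0 := by
    have h := hasFPowerSeriesOnBall_fourier hw hδ hb 0
    rw [fourierTaylorSeries_zero_eq_zero hm] at h
    exact h.eventually_eq_zero
  funext v
  exact (analyticOnNhd_fourier hw hδ hb).eqOn_zero_of_preconnected_of_eventuallyEq_zero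
    isPreconnected_univ (mem_univ 0) h_near_zero (mem_univ v)

lemma eq_zero_of_moments_eq_zero [CompleteSpace X] (hw : Continuous w) (hδ : 0 < δ)
    (hb : ∀ t, ‖w t‖ ≤ C * exp (-(δ * |t|)))
    (hm : ∀ n : ℕ, ∫ t : ℝ, (t : ℂ) ^ n • w t = 0) : w = 0 := by
  have h_fourier := fourier_eq_zero_of_moments_eq_zero hw.aestronglyMeasurable hδ hb hm
  have hw_int : Integrable w := by
    simpa using integrable_ofReal_pow_smul hw.aestronglyMeasurable hδ hb 0
  rw [← hw.fourierInv_fourier_eq hw_int (h_fourier ▸ integrable_zero _ _ _), h_fourier]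
  ext1 v
  simp [Real.fourierInv_eq]

lemma integral_ofReal_pow_smul_of_even (hw_even : ∀ t, w (-t) = w t) {n : ℕ}
    (hint : Integrable fun t : ℝ => (t : ℂ) ^ n • w t) :
    ∫ t : ℝ, (t : ℂ) ^ n • w t = (1 + (-1) ^ n : ℂ) • ∫ t in Ioi (0 : ℝ), (t : ℂ) ^ n • w t := by
  rw [integral_eq_setIntegral_Ioi_add_comp_neg hint, add_smul, one_smul, ← integral_smul]
  congr 1
  refine setIntegral_congr_fun measurableSet_Ioi fun t _ => ?_
  rw [hw_even, Complex.ofReal_neg, neg_pow, smul_smul]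

end ExponentialDecay

theorem stmt_8_general {X : Type*} [NormedAddCommGroup X] [NormedSpace ℂ X] [CompleteSpace X]
    (u : ℝ → X) (C δ : ℝ) (hδ : 0 < δ)
    (hu : ContinuousOn u (Ici 0))
    (hbound : ∀ t : ℝ, 0 ≤ t → ‖u t‖ ≤ C * Real.exp (-δ * t))
    (hmom : ∀ k : ℕ, (∫ t in Ioi (0:ℝ), ((t : ℂ) ^ (2 * k)) • u t) = 0) :
    ∀ t : ℝ, 0 ≤ t → u t = 0 := by
  set w : ℝ → X := fun t => u |t|
  have hw : Continuous w := hu.comp_continuous continuous_abs abs_nonneg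
  have hb (t : ℝ) : ‖w t‖ ≤ C * Real.exp (-(δ * |t|)) := by
    simpa using hbound |t| (abs_nonneg t)
  have hm (n : ℕ) : ∫ t : ℝ, (t : ℂ) ^ n • w t = 0 := by
    rw [integral_ofReal_pow_smul_of_even (fun t => by simp [w])
      (integrable_ofReal_pow_smul hw.aestronglyMeasurable hδ hb n)]
    rcases n.even_or_odd with ⟨k, rfl⟩ | h_odd
    · have h_Ioi : ∫ t in Ioi (0 : ℝ), (t : ℂ) ^ (k + k) • w t = 0 := by
        rw [← two_mul, ← hmom k]
        exact setIntegral_congr_fun measurableSet_Ioi fun t ht => by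
          simp only [w, abs_of_pos (mem_Ioi.mp ht)]
      rw [h_Ioi, smul_zero]
    · rw [h_odd.neg_one_pow, add_neg_cancel, zero_smul]
  intro t ht
  simpa [w, abs_of_nonneg ht] using congrFun (eq_zero_of_moments_eq_zero hw hδ hb hm) t

theorem stmt_8 {X : Type*} [NormedAddCommGroup X] [NormedSpace ℂ X] [CompleteSpace X]
    (u : ℝ → X) (C δ : ℝ) (hC : 0 < C) (hδ : 0 < δ)
    (hu : ContinuousOn u (Ici 0))
    (hbound : ∀ t : ℝ, 0 ≤ t → ‖u t‖ ≤ C * Real.exp (-δ * t))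
    (hmom : ∀ k : ℕ, (∫ t in Ioi (0:ℝ), ((t : ℂ) ^ (2 * k)) • u t) = 0) :
    ∀ t : ℝ, 0 ≤ t → u t = 0 :=
  stmt_8_general u C δ hδ hu hbound hmom
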